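/- arXiv:1304.3284 — 2 statements merged into one kernel-verified Lean document; each statement's English description precedes it below -/
import Mathlib

section
/- Let U_1,...,U_M : (0,∞) → ℝ satisfy the standing assumptions and fix c > 0. Then the optimal-allocation map w ↦ π^m(w,c) is strictly increasing in w^m and strictly decreasing in w^l for every l ≠ m, on the interior of the simplex Σ^M. -/
/-! An optimal allocation gives every agent a positive share: at a zero share the Inada condition
makes the marginal gain of a small transfer unbounded, while its marginal cost elsewhere stays
finite. Hence the first-order conditions `w l U'_l(p l) = λ` hold with a common multiplier `λ`.
Raising `w m` alone must raise `λ`: otherwise every share `l ≠ m` weakly grows, so the `m`-th one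
weakly shrinks, and then `λ = w m U'_m(p m)` strictly grows after all. A larger `λ` shrinks every
share `l ≠ m`, as `U'_l` is strictly decreasing, so the budget constraint forces the `m`-th share
up. -/

open Finset

/-- Standing assumptions on a utility function `U` with derivative `U'`:
strictly increasing, strictly concave, continuously differentiable on `(0,∞)`,
satisfying the Inada conditions. -/
def StandingAssumptions (U U' : ℝ → ℝ) : Prop :=
  StrictMonoOn U (Set.Ioi (0 : ℝ)) ∧ StrictConcaveOn ℝ (Set.Ioi (0 : ℝ)) U ∧
  (∀ c : ℝ, 0 < c → HasDerivAt U (U' c) c) ∧ ContinuousOn U' (Set.Ioi (0 : ℝ)) ∧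
  Filter.Tendsto U' Filter.atTop (nhds 0) ∧
  Filter.Tendsto U' (nhdsWithin 0 (Set.Ioi (0 : ℝ))) Filter.atTop

namespace StandingAssumptions

variable {U U' : ℝ → ℝ} (h : StandingAssumptions U U') {x y : ℝ}
include h

theorem strictMonoOn : StrictMonoOn U (Set.Ioi 0) := h.1

theorem strictConcaveOn : StrictConcaveOn ℝ (Set.Ioi 0) U := h.2.1

theorem hasDerivAt (hx : 0 < x) : HasDerivAt U (U' x) x := h.2.2.1 x hx

theorem tendsto_deriv_nhdsGT_zero : Filter.Tendsto U' (nhdsWithin 0 (Set.Ioi 0)) Filter.atTop :=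
  h.2.2.2.2.2

theorem strictAntiOn_deriv : StrictAntiOn U' (Set.Ioi 0) := fun _ ha _ hb hab =>
  (h.strictConcaveOn.lt_slope_of_hasDerivAt ha hb hab (h.hasDerivAt hb)).trans
    (h.strictConcaveOn.slope_lt_of_hasDerivAt ha hb hab (h.hasDerivAt ha))

theorem deriv_pos (hx : 0 < x) : 0 < U' x := by
  have hx1 : (0 : ℝ) < x + 1 := by linarith
  have hslope : 0 < slope U x (x + 1) :=
    (slope_pos_iff_of_le (by linarith)).2 (h.strictMonoOn hx hx1 (by linarith))
  exact hslope.trans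
    (h.strictConcaveOn.slope_lt_of_hasDerivAt hx hx1 (by linarith) (h.hasDerivAt hx))

theorem sub_mul_deriv_lt_sub (hx : 0 < x) (hxy : x < y) : (y - x) * U' y < U y - U x := by
  have hy : 0 < y := hx.trans hxy
  have := h.strictConcaveOn.lt_slope_of_hasDerivAt hx hy hxy (h.hasDerivAt hy)
  rwa [slope_def_field, lt_div_iff₀ (sub_pos.2 hxy), mul_comm] at this

theorem sub_lt_sub_mul_deriv (hx : 0 < x) (hxy : x < y) : U y - U x < (y - x) * U' x := by
  have hy : 0 < y := hx.trans hxy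
  have := h.strictConcaveOn.slope_lt_of_hasDerivAt hx hy hxy (h.hasDerivAt hx)
  rwa [slope_def_field, div_lt_iff₀ (sub_pos.2 hxy), mul_comm] at this

end StandingAssumptions

section Allocation

variable {ι : Type*} [Fintype ι] [DecidableEq ι]

theorem sum_sub_sum_eq_of_eq_off_pair {β : Type*} [AddCommGroup β] {f g : ι → β} {i j : ι}
    (hij : i ≠ j) (h : ∀ x, x ≠ i → x ≠ j → f x = g x) :
    ∑ x, f x - ∑ x, g x = (f i - g i) + (f j - g j) := by
  rw [← sum_sub_distrib, ← sum_pair hij (f := fun x => f x - g x)]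
  refine (sum_subset (subset_univ _) fun x _ hx => ?_).symm
  simp only [mem_insert, mem_singleton, not_or] at hx
  rw [h x hx.1 hx.2, sub_self]

theorem apply_lt_apply_iff_sum_erase_lt {f g : ι → ℝ} (h : ∑ x, f x = ∑ x, g x) (m : ι) :
    f m < g m ↔ ∑ x ∈ univ.erase m, g x < ∑ x ∈ univ.erase m, f x := by
  rw [← add_sum_erase _ _ (mem_univ m), ← add_sum_erase _ g (mem_univ m)] at h
  constructor <;> intro <;> linarith

structure IsOptimalAllocation (U : ι → ℝ → ℝ) (w : ι → ℝ) (c : ℝ) (p : ι → ℝ) : Prop where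
  nonneg : ∀ l, 0 ≤ p l
  sum_eq : ∑ l, p l = c
  objective_le : ∀ q : ι → ℝ, (∀ l, 0 ≤ q l) → ∑ l, q l = c →
    ∑ l, w l * U l (q l) ≤ ∑ l, w l * U l (p l)

namespace IsOptimalAllocation

variable {U U' : ι → ℝ → ℝ} {w p : ι → ℝ} {c : ℝ}

theorem transfer_le (hp : IsOptimalAllocation U w c p) {i j : ι} (hij : i ≠ j) {t : ℝ}
    (hi : 0 ≤ p i + t) (hj : 0 ≤ p j - t) :
    w i * U i (p i + t) + w j * U j (p j - t) ≤ w i * U i (p i) + w j * U j (p j) := by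
  set q := Function.update (Function.update p i (p i + t)) j (p j - t)
  have hq_off : ∀ x, x ≠ i → x ≠ j → q x = p x := fun x hxi hxj => by
    simp [q, Function.update_of_ne hxi, Function.update_of_ne hxj]
  have hqi : q i = p i + t := by simp [q, hij]
  have hqj : q j = p j - t := by simp [q]
  have hq_nonneg : ∀ x, 0 ≤ q x := fun x => by
    by_cases hxi : x = i
    · rwa [hxi, hqi]
    by_cases hxj : x = j
    · rwa [hxj, hqj]
    rw [hq_off x hxi hxj]
    exact hp.nonneg x
  have hq_sum : ∑ x, q x = c := by
    have := sum_sub_sum_eq_of_eq_off_pair hij hq_off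
    rw [hqi, hqj, hp.sum_eq] at this
    linarith
  have hobj := sum_sub_sum_eq_of_eq_off_pair (f := fun x => w x * U x (q x))
    (g := fun x => w x * U x (p x)) hij fun x hxi hxj => by rw [hq_off x hxi hxj]
  rw [hqi, hqj] at hobj
  linarith [hp.objective_le q hq_nonneg hq_sum]

theorem pos (hp : IsOptimalAllocation U w c p) (hU : ∀ l, StandingAssumptions (U l) (U' l))
    (hU0 : ∀ l x, 0 < x → U l 0 ≤ U l x) (hc : 0 < c) (hw : ∀ l, 0 < w l) (l : ι) :
    0 < p l := by
  refine (hp.nonneg l).lt_of_ne' fun hl => ?_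
  obtain ⟨k, hk⟩ : ∃ k, 0 < p k := by
    by_contra! hnonpos
    linarith [sum_nonpos (s := univ) fun x _ => hnonpos x, hp.sum_eq]
  have hkl : k ≠ l := by rintro rfl; linarith
  -- Moving `δ` from `k` to `l` gains at least `(δ/2) U'_l(δ)` and loses at most `δ U'_k(p_k/2)`.
  obtain ⟨δ, ⟨hδU', hδk⟩, hδ⟩ : ∃ δ, (2 * w k * U' k (p k / 2) / w l < U' l δ ∧ δ < p k / 2) ∧
      0 < δ :=
    ((((hU l).tendsto_deriv_nhdsGT_zero.eventually_gt_atTop _).and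
      ((eventually_lt_nhds (half_pos hk)).filter_mono nhdsWithin_le_nhds)).and
      self_mem_nhdsWithin).exists
  have htransfer := hp.transfer_le hkl.symm (t := δ) (by linarith) (by linarith)
  rw [hl, zero_add] at htransfer
  have hgain : δ / 2 * U' l δ < U l δ - U l 0 := by
    have := (hU l).sub_mul_deriv_lt_sub (half_pos hδ) (half_lt_self hδ)
    linarith [hU0 l (δ / 2) (half_pos hδ)]
  have hloss : U k (p k) - U k (p k - δ) < δ * U' k (p k / 2) := by
    have hsecant :=
      (hU k).sub_lt_sub_mul_deriv (x := p k - δ) (y := p k) (by linarith) (by linarith)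
    have hmono := (hU k).strictAntiOn_deriv (a := p k / 2) (b := p k - δ)
      (half_pos hk) (show 0 < p k - δ by linarith) (by linarith)
    rw [sub_sub_cancel] at hsecant
    exact hsecant.trans (mul_lt_mul_of_pos_left hmono hδ)
  have hmarginal := (div_lt_iff₀ (hw l)).1 hδU'
  linarith [mul_lt_mul_of_pos_left hgain (hw l), mul_lt_mul_of_pos_left hloss (hw k),
    mul_lt_mul_of_pos_left hmarginal (half_pos hδ)]

theorem mul_deriv_eq (hp : IsOptimalAllocation U w c p)
    (hU : ∀ l x, 0 < x → HasDerivAt (U l) (U' l x) x) (hpos : ∀ l, 0 < p l) (i j : ι) :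
    w i * U' i (p i) = w j * U' j (p j) := by
  rcases eq_or_ne i j with rfl | hij
  · rfl
  let f t := w i * U i (p i + t) + w j * U j (p j - t)
  have hi : HasDerivAt (U i) (U' i (p i)) (p i + 0) := by rw [add_zero]; exact hU i _ (hpos i)
  have hj : HasDerivAt (U j) (U' j (p j)) (p j - 0) := by rw [sub_zero]; exact hU j _ (hpos j)
  have hf : HasDerivAt f (w i * U' i (p i) + w j * -U' j (p j)) 0 :=
    ((hi.comp_const_add _ _).const_mul (w i)).add ((hj.comp_const_sub _ _).const_mul (w j))
  have hmax : IsLocalMax f 0 := by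
    filter_upwards [Ioo_mem_nhds (neg_lt_zero.2 (hpos i)) (hpos j)] with t ht
    simpa [f] using hp.transfer_le hij (by linarith [ht.1]) (by linarith [ht.2])
  linarith [hmax.hasDerivAt_eq_zero hf]

end IsOptimalAllocation

theorem lt_and_forall_ne_gt_of_equalized_marginals [Nontrivial ι] {U' : ι → ℝ → ℝ}
    (hanti : ∀ l, StrictAntiOn (U' l) (Set.Ioi 0)) {w₁ w₂ p₁ p₂ : ι → ℝ} {m : ι}
    (hw₁ : ∀ l, 0 < w₁ l) (heq : ∀ l, l ≠ m → w₁ l = w₂ l) (hlt : w₁ m < w₂ m)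
    (hp₁ : ∀ l, 0 < p₁ l) (hp₂ : ∀ l, 0 < p₂ l) (hsum : ∑ l, p₁ l = ∑ l, p₂ l)
    (hU'pos : 0 < U' m (p₂ m))
    (hfoc₁ : ∀ i j, w₁ i * U' i (p₁ i) = w₁ j * U' j (p₁ j))
    (hfoc₂ : ∀ i j, w₂ i * U' i (p₂ i) = w₂ j * U' j (p₂ j)) :
    p₁ m < p₂ m ∧ ∀ l, l ≠ m → p₂ l < p₁ l := by
  set μ₁ := w₁ m * U' m (p₁ m) with hμ₁
  set μ₂ := w₂ m * U' m (p₂ m) with hμ₂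
  have hcross : ∀ l, l ≠ m → (μ₁ < μ₂ ↔ p₂ l < p₁ l) := fun l hl => by
    rw [hμ₁, hμ₂, ← hfoc₁ l m, ← hfoc₂ l m, ← heq l hl, mul_lt_mul_iff_right₀ (hw₁ l)]
    exact (hanti l).lt_iff_gt (hp₁ l) (hp₂ l)
  have hμ : μ₁ < μ₂ := by
    by_contra! hμ
    have hm : p₂ m ≤ p₁ m := by
      rw [← not_lt, apply_lt_apply_iff_sum_erase_lt hsum, not_lt]
      refine sum_le_sum fun l hl => ?_
      exact not_lt.1 fun h => hμ.not_gt ((hcross l (ne_of_mem_erase hl)).2 h)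
    refine hμ.not_gt ?_
    calc μ₁ ≤ w₁ m * U' m (p₂ m) :=
          mul_le_mul_of_nonneg_left ((hanti m).le_iff_ge (hp₁ m) (hp₂ m) |>.2 hm) (hw₁ m).le
      _ < μ₂ := mul_lt_mul_of_pos_right hlt hU'pos
  have hrest : ∀ l, l ≠ m → p₂ l < p₁ l := fun l hl => (hcross l hl).1 hμ
  refine ⟨(apply_lt_apply_iff_sum_erase_lt hsum m).2 ?_, hrest⟩
  obtain ⟨l, hl⟩ := exists_ne m
  exact sum_lt_sum_of_nonempty ⟨l, mem_erase.2 ⟨hl, mem_univ l⟩⟩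
    fun x hx => hrest x (ne_of_mem_erase hx)

end Allocation

/-- For fixed `c > 0`, the optimal allocation `π^m(w,c)` is strictly
increasing in `w^m` and strictly decreasing in `w^l` for `l ≠ m`: if `w₁` and `w₂`
are strictly positive weight vectors differing only in the `m`-th coordinate with
`w₁^m < w₂^m`, and `p₁, p₂` are the corresponding optimal allocations of `c`, then
`p₁^m < p₂^m` and `p₂^l < p₁^l` for every `l ≠ m`. -/
theorem optimal_allocation_monotone_in_weights
    (M : ℕ) (hM : 1 < M) (U U' : Fin M → ℝ → ℝ)
    (hU : ∀ m, StandingAssumptions (U m) (U' m))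
    (hU0 : ∀ m, ∀ c : ℝ, 0 < c → U m 0 ≤ U m c)
    (c : ℝ) (hc : 0 < c) (m : Fin M)
    (w₁ w₂ : Fin M → ℝ) (hw₁ : ∀ l, 0 < w₁ l) (hw₂ : ∀ l, 0 < w₂ l)
    (heq : ∀ l, l ≠ m → w₁ l = w₂ l) (hlt : w₁ m < w₂ m)
    (p₁ p₂ : Fin M → ℝ)
    (hp₁pos : ∀ l, 0 ≤ p₁ l) (hp₁sum : ∑ l, p₁ l = c)
    (hp₁opt : ∀ q : Fin M → ℝ, (∀ l, 0 ≤ q l) → (∑ l, q l = c) →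
      ∑ l, w₁ l * U l (q l) ≤ ∑ l, w₁ l * U l (p₁ l))
    (hp₂pos : ∀ l, 0 ≤ p₂ l) (hp₂sum : ∑ l, p₂ l = c)
    (hp₂opt : ∀ q : Fin M → ℝ, (∀ l, 0 ≤ q l) → (∑ l, q l = c) →
      ∑ l, w₂ l * U l (q l) ≤ ∑ l, w₂ l * U l (p₂ l)) :
    p₁ m < p₂ m ∧ ∀ l, l ≠ m → p₂ l < p₁ l := by
  have : Nontrivial (Fin M) := Fin.nontrivial_iff_two_le.2 hM
  have hopt₁ : IsOptimalAllocation U w₁ c p₁ := ⟨hp₁pos, hp₁sum, hp₁opt⟩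
  have hopt₂ : IsOptimalAllocation U w₂ c p₂ := ⟨hp₂pos, hp₂sum, hp₂opt⟩
  have hderiv : ∀ l x, 0 < x → HasDerivAt (U l) (U' l x) x := fun l _ hx => (hU l).hasDerivAt hx
  have hpos₁ := hopt₁.pos hU hU0 hc hw₁
  have hpos₂ := hopt₂.pos hU hU0 hc hw₂
  exact lt_and_forall_ne_gt_of_equalized_marginals (fun l => (hU l).strictAntiOn_deriv) hw₁ heq
    hlt hpos₁ hpos₂ (hp₁sum.trans hp₂sum.symm) ((hU m).deriv_pos (hpos₂ m))
    (hopt₁.mul_deriv_eq hderiv hpos₁) (hopt₂.mul_deriv_eq hderiv hpos₂)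
end

section
/- Let (S,𝒮,μ) be a σ-finite measure space, Λ : S → (0,∞) measurable, and (U_m) measurable utility fields satisfying the standing assumptions. Fix w in the interior of Σ^M, z > 0, set ζ = z·U_c(w,Λ) and α^m_1 = π^m(w,Λ). Then for every β ∈ L^0_+ with E[ζ(β − α^m_1)] = 0 and E[U_m(β)] well-defined, one has E[U_m(β)] ≤ E[U_m(α^m_1)], provided E[|U_m(α^m_1)|] < ∞ and E[U_c(w,Λ)Λ] < ∞. That is, (ζ, (α^m_1)) satisfies the agents' optimality condition of an Arrow–Debreu equilibrium. -/
open Finset MeasureTheory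

/-- Extended negative part of an extended real number. -/
noncomputable def enegpart (x : EReal) : ENNReal :=
  if x = ⊥ then ⊤ else ENNReal.ofReal (-(x.toReal))

/-- Extended positive part of an extended real number. -/
noncomputable def epospart (x : EReal) : ENNReal :=
  if x = ⊤ then ⊤ else ENNReal.ofReal (x.toReal)

/-- Expectation with the paper's convention: `E[f] = -∞` whenever the negative
part of `f` fails to be integrable. -/
noncomputable def eE {S : Type*} [MeasurableSpace S] (μ : Measure S)
    (f : S → EReal) : EReal :=
  if (∫⁻ s, enegpart (f s) ∂μ) = ⊤ then ⊥
  else ((∫⁻ s, epospart (f s) ∂μ : ENNReal) : EReal) -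
    ((∫⁻ s, enegpart (f s) ∂μ : ENNReal) : EReal)

/-! Since `U_c(w,Λ) = w^m U_m'(α^m_1)`, the quantity `(z w^m)⁻¹ ζ (β − α^m_1)` is the tangent-line
increment of the concave `U_m` at `α^m_1`, so `U_m(β) ≤ U_m(α^m_1) + (z w^m)⁻¹ ζ (β − α^m_1)`
pointwise; integrating, the budget constraint kills the second term. The integrable majorant also
makes `E[U_m(β)]` either `−∞` or a genuine Bochner integral. -/

lemma ConcaveOn.le_add_mul_sub_of_hasDerivAt {S : Set ℝ} {f : ℝ → ℝ} {f' x y : ℝ}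
    (hf : ConcaveOn ℝ S f) (hx : x ∈ S) (hy : y ∈ S) (hd : HasDerivAt f f' x) :
    f y ≤ f x + f' * (y - x) := by
  rcases lt_trichotomy y x with hyx | rfl | hxy
  · have h := hf.le_slope_of_hasDerivAt hy hx hyx hd
    rw [slope_def_field, le_div_iff₀ (sub_pos.2 hyx)] at h
    linarith
  · simp
  · have h := hf.slope_le_of_hasDerivAt hx hy hxy hd
    rw [slope_def_field, div_le_iff₀ (sub_pos.2 hxy)] at h
    linarith

lemma ConcaveOn.le_add_mul_sub_of_hasDerivAt_of_mem_closure {S : Set ℝ} {f : ℝ → ℝ}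
    {f' x y : ℝ} (hf : ConcaveOn ℝ S f) (hx : x ∈ S) (hy : y ∈ closure S)
    (hfy : ∀ t ∈ S, f y ≤ f t) (hd : HasDerivAt f f' x) :
    f y ≤ f x + f' * (y - x) := by
  have hclosed : IsClosed {t | f y ≤ f x + f' * (t - x)} :=
    isClosed_le continuous_const (by fun_prop)
  exact closure_minimal (fun t ht => (hfy t ht).trans (hf.le_add_mul_sub_of_hasDerivAt hx ht hd))
    hclosed hy

lemma ConcaveOn.le_add_mul_sub_of_hasDerivAt_of_nonneg {f : ℝ → ℝ} {f' x y : ℝ}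
    (hf : ConcaveOn ℝ (Set.Ioi 0) f) (hf0 : ∀ c, 0 < c → f 0 ≤ f c) (hx : 0 < x) (hy : 0 ≤ y)
    (hd : HasDerivAt f f' x) :
    f y ≤ f x + f' * (y - x) := by
  rcases hy.eq_or_lt with rfl | hy
  · exact hf.le_add_mul_sub_of_hasDerivAt_of_mem_closure hx (by simp) hf0 hd
  · exact hf.le_add_mul_sub_of_hasDerivAt hx hy hd

@[simp]
lemma enegpart_coe (x : ℝ) : enegpart x = ENNReal.ofReal (-x) := by
  simp [enegpart]

@[simp]
lemma epospart_coe (x : ℝ) : epospart x = ENNReal.ofReal x := by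
  simp [epospart]

section eE

variable {S : Type*} [MeasurableSpace S] {μ : Measure S} {f g : S → ℝ}

lemma eE_coe_of_integrable (hf : Integrable f μ) :
    eE μ (fun s => (f s : EReal)) = ∫ s, f s ∂μ := by
  have hpos : ∫⁻ s, ENNReal.ofReal (f s) ∂μ ≠ ⊤ := hf.lintegral_lt_top.ne
  have hneg : ∫⁻ s, ENNReal.ofReal (-f s) ∂μ ≠ ⊤ := hf.neg.lintegral_lt_top.ne
  simp only [eE, enegpart_coe, epospart_coe, if_neg hneg]
  rw [integral_eq_lintegral_pos_part_sub_lintegral_neg_part hf, EReal.coe_sub,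
    EReal.coe_ennreal_toReal hpos, EReal.coe_ennreal_toReal hneg]

lemma integrable_of_le_of_lintegral_ofReal_neg_ne_top (hf : AEStronglyMeasurable f μ)
    (hg : Integrable g μ) (hfg : f ≤ᵐ[μ] g) (hneg : ∫⁻ s, ENNReal.ofReal (-f s) ∂μ ≠ ⊤) :
    Integrable f μ := by
  have hneg_int : Integrable (fun s => (ENNReal.ofReal (-f s)).toReal) μ :=
    integrable_toReal_of_lintegral_ne_top hf.aemeasurable.neg.ennreal_ofReal hneg
  refine integrable_of_le_of_le hf (Filter.Eventually.of_forall fun s => ?_) hfg hneg_int.neg hg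
  simp only [Pi.neg_apply, ENNReal.toReal_ofReal', neg_le]
  exact le_max_left _ _

lemma eE_coe_le_integral_of_le (hf : AEStronglyMeasurable f μ) (hg : Integrable g μ)
    (hfg : f ≤ᵐ[μ] g) :
    eE μ (fun s => (f s : EReal)) ≤ ∫ s, g s ∂μ := by
  by_cases hneg : ∫⁻ s, ENNReal.ofReal (-f s) ∂μ = ⊤
  · simp [eE, hneg]
  · have hfi := integrable_of_le_of_lintegral_ofReal_neg_ne_top hf hg hfg hneg
    rw [eE_coe_of_integrable hfi]
    exact EReal.coe_le_coe_iff.2 (integral_mono_ae hfi hg hfg)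

end eE

theorem agents_optimality_condition_general
    {S : Type*} [MeasurableSpace S] (μ : Measure S)
    (M : ℕ)
    (U U' : Fin M → S → ℝ → ℝ)
    (hUmeas : ∀ n, Measurable (fun q : S × ℝ => U n q.1 q.2))
    (hU : ∀ n, ∀ s, StandingAssumptions (U n s) (U' n s))
    (hU0 : ∀ n, ∀ s, ∀ c : ℝ, 0 < c → U n s 0 ≤ U n s c)
    (w : Fin M → ℝ) (hw : ∀ n, 0 < w n)
    (z : ℝ) (hz : 0 < z)
    (p : Fin M → S → ℝ) (hpm : ∀ n, Measurable (p n))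
    (hppos : ∀ n, ∀ s, 0 < p n s)
    (Uc : S → ℝ) (hUcdef : ∀ s, ∀ n, Uc s = w n * U' n s (p n s))
    (m : Fin M)
    (hint1 : Integrable (fun s => |U m s (p m s)|) μ)
    (β : S → ℝ) (hβm : Measurable β) (hβpos : ∀ s, 0 ≤ β s)
    (hbudget_int : Integrable (fun s => (z * Uc s) * (β s - p m s)) μ)
    (hbudget : (∫ s, (z * Uc s) * (β s - p m s) ∂μ) = 0) :
    eE μ (fun s => (U m s (β s) : EReal)) ≤ ((∫ s, U m s (p m s) ∂μ : ℝ) : EReal) := by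
  have htangent : ∀ s, U m s (β s) ≤
      U m s (p m s) + (z * w m)⁻¹ * ((z * Uc s) * (β s - p m s)) := by
    intro s
    obtain ⟨-, hconc, hderiv, -⟩ := hU m s
    have hζ : (z * w m)⁻¹ * ((z * Uc s) * (β s - p m s)) = U' m s (p m s) * (β s - p m s) := by
      rw [hUcdef s m]
      field_simp [hz.ne', (hw m).ne']
    rw [hζ]
    exact hconc.concaveOn.le_add_mul_sub_of_hasDerivAt_of_nonneg (hU0 m s) (hppos m s) (hβpos s)
      (hderiv _ (hppos m s))
  have hUp : Integrable (fun s => U m s (p m s)) μ :=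
    (integrable_norm_iff ((hUmeas m).comp (measurable_id.prodMk (hpm m))).aestronglyMeasurable).1
      hint1
  calc eE μ (fun s => (U m s (β s) : EReal))
      ≤ ∫ s, (U m s (p m s) + (z * w m)⁻¹ * ((z * Uc s) * (β s - p m s))) ∂μ :=
        eE_coe_le_integral_of_le ((hUmeas m).comp (measurable_id.prodMk hβm)).aestronglyMeasurable
          (hUp.add (hbudget_int.const_mul _)) (Filter.Eventually.of_forall htangent)
    _ = ∫ s, U m s (p m s) ∂μ := by
      rw [integral_add hUp (hbudget_int.const_mul _), integral_const_mul, hbudget, mul_zero,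
        add_zero]

/-- With `ζ = z·U_c(w,Λ)` and `α^m_1 = π^m(w,Λ)` for `w` in the
interior of the simplex and `z > 0`, every budget-feasible consumption `β ∈ L⁰₊`
(i.e. `E[ζ(β − α^m_1)] = 0`) satisfies `E[U_m(β)] ≤ E[U_m(α^m_1)]`: the agents'
optimality condition of an Arrow–Debreu equilibrium holds. -/
theorem agents_optimality_condition
    {S : Type*} [MeasurableSpace S] (μ : Measure S) [SigmaFinite μ]
    (M : ℕ) (Λ : S → ℝ) (hΛm : Measurable Λ) (hΛpos : ∀ s, 0 < Λ s)
    (U U' : Fin M → S → ℝ → ℝ)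
    (hUmeas : ∀ n, Measurable (fun q : S × ℝ => U n q.1 q.2))
    (hU : ∀ n, ∀ s, StandingAssumptions (U n s) (U' n s))
    (hU0 : ∀ n, ∀ s, ∀ c : ℝ, 0 < c → U n s 0 ≤ U n s c)
    (w : Fin M → ℝ) (hw : ∀ n, 0 < w n) (hw1 : ∑ n, w n = 1)
    (z : ℝ) (hz : 0 < z)
    (p : Fin M → S → ℝ) (hpm : ∀ n, Measurable (p n))
    (hppos : ∀ n, ∀ s, 0 < p n s) (hpsum : ∀ s, ∑ n, p n s = Λ s)
    (hpopt : ∀ s, ∀ q : Fin M → ℝ, (∀ n, 0 ≤ q n) → (∑ n, q n = Λ s) →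
      ∑ n, w n * U n s (q n) ≤ ∑ n, w n * U n s (p n s))
    (Uc : S → ℝ) (hUcdef : ∀ s, ∀ n, Uc s = w n * U' n s (p n s))
    (m : Fin M)
    (hint1 : Integrable (fun s => |U m s (p m s)|) μ)
    (hint2 : Integrable (fun s => Uc s * Λ s) μ)
    (β : S → ℝ) (hβm : Measurable β) (hβpos : ∀ s, 0 ≤ β s)
    (hbudget_int : Integrable (fun s => (z * Uc s) * (β s - p m s)) μ)
    (hbudget : (∫ s, (z * Uc s) * (β s - p m s) ∂μ) = 0) :
    eE μ (fun s => (U m s (β s) : EReal)) ≤ ((∫ s, U m s (p m s) ∂μ : ℝ) : EReal) :=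
  agents_optimality_condition_general μ M U U' hUmeas hU hU0 w hw z hz p hpm hppos Uc hUcdef m hint1
    β hβm hβpos hbudget_int hbudget
end
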